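/- Let J be a finite-dimensional nilpotent associative F_q-algebra and G = 1 + J, with the double-orbit supercharacter theory S whose classes are K_g = {1 + x(g-1)y : x,y ∈ G}. Define γ_1(S) = G and γ_{i+1}(S) = ⟨g⁻¹k : g ∈ γ_i(S), k ∈ K_g⟩. Then γ_i(S) = 1 + J^i for every i ≥ 1. -/

import Mathlib

open scoped Pointwise

/-- The double-orbit superclass of `g` in the algebra group `G = 1 + J`:
`K_g = {1 + x(g-1)y : x, y ∈ G}`. -/
def doubleOrbitClass {A : Type*} [Ring A] (G : Subgroup Aˣ) (g : Aˣ) : Set Aˣ :=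
  {u : Aˣ | ∃ x ∈ G, ∃ y ∈ G, (u : A) = 1 + (x : A) * ((g : A) - 1) * (y : A)}

/-- The lower central series of the double-orbit supercharacter theory:
`γ 0 = G` (this is `γ_1` in the paper), and
`γ (i+1) = ⟨g⁻¹k : g ∈ γ i, k ∈ K_g⟩`. -/
def doGamma {A : Type*} [Ring A] (G : Subgroup Aˣ) : ℕ → Subgroup Aˣ
  | 0 => G
  | (i + 1) => Subgroup.closure
      {w : Aˣ | ∃ g ∈ doGamma G i, ∃ k ∈ doubleOrbitClass G g, w = g⁻¹ * k}

/-- The power ideals of `J` as additive subgroups: `idealPow J 0 = J` and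
`idealPow J (i+1)` is the additive subgroup generated by `J * idealPow J i`,
so `idealPow J i` is `J^{i+1}`. -/
def idealPow {A : Type*} [Ring A] (J : Set A) : ℕ → AddSubgroup A
  | 0 => AddSubgroup.closure J
  | (i + 1) => AddSubgroup.closure (J * ((idealPow J i : AddSubgroup A) : Set A))


section AuxIP
variable {A : Type*} [Ring A] (J : TwoSidedIdeal A)

lemma mem_ip_zero {z : A} : z ∈ idealPow (J : Set A) 0 ↔ z ∈ J := by
  constructor
  · intro h
    refine AddSubgroup.closure_induction (fun x hx => hx) J.zero_mem
      (fun x y _ _ hx hy => J.add_mem hx hy) (fun x _ hx => J.neg_mem hx) h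
  · intro h
    exact AddSubgroup.subset_closure h

lemma ip_mul (a : A) : ∀ m {z : A}, z ∈ idealPow (J : Set A) m →
    a * z ∈ idealPow (J : Set A) m ∧ z * a ∈ idealPow (J : Set A) m := by
  intro m
  induction m with
  | zero =>
    intro z hz
    rw [mem_ip_zero] at hz ⊢
    rw [mem_ip_zero J]
    exact ⟨J.mul_mem_left a z hz, J.mul_mem_right z a hz⟩
  | succ m ih =>
    intro z hz
    refine AddSubgroup.closure_induction (fun x hx => ?_) (by simp [AddSubgroup.zero_mem])
      (fun x y _ _ hx hy => ?_) (fun x _ hx => ?_) hz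
    · obtain ⟨j, hj, s, hs, rfl⟩ := Set.mem_mul.1 hx
      constructor
      · rw [← mul_assoc]
        exact AddSubgroup.subset_closure (Set.mul_mem_mul (J.mul_mem_left a j hj) hs)
      · rw [mul_assoc]
        exact AddSubgroup.subset_closure (Set.mul_mem_mul hj ((ih hs).2))
    · rw [mul_add, add_mul] at *
      exact ⟨AddSubgroup.add_mem _ hx.1 hy.1, AddSubgroup.add_mem _ hx.2 hy.2⟩
    · rw [mul_neg, neg_mul]
      exact ⟨AddSubgroup.neg_mem _ hx.1, AddSubgroup.neg_mem _ hx.2⟩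

lemma ip_mul_left (a : A) {m : ℕ} {z : A} (hz : z ∈ idealPow (J : Set A) m) :
    a * z ∈ idealPow (J : Set A) m := (ip_mul J a m hz).1

lemma ip_mul_right (a : A) {m : ℕ} {z : A} (hz : z ∈ idealPow (J : Set A) m) :
    z * a ∈ idealPow (J : Set A) m := (ip_mul J a m hz).2

lemma ip_succ_le (m : ℕ) : idealPow (J : Set A) (m + 1) ≤ idealPow (J : Set A) m := by
  show AddSubgroup.closure _ ≤ _
  rw [AddSubgroup.closure_le]
  rintro z hz
  obtain ⟨j, hj, s, hs, rfl⟩ := Set.mem_mul.1 hz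
  exact ip_mul_left J j hs

lemma ip_le {i m : ℕ} (h : i ≤ m) : idealPow (J : Set A) m ≤ idealPow (J : Set A) i := by
  induction m, h using Nat.le_induction with
  | base => exact le_rfl
  | succ m hm ih => exact (ip_succ_le J m).trans ih

lemma ip_subset_J {m : ℕ} {z : A} (hz : z ∈ idealPow (J : Set A) m) : z ∈ J :=
  (mem_ip_zero J).1 (ip_le J (Nat.zero_le m) hz)

lemma mem_ip_succ_left {m : ℕ} {j z : A} (hj : j ∈ J) (hz : z ∈ idealPow (J : Set A) m) :
    j * z ∈ idealPow (J : Set A) (m + 1) :=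
  AddSubgroup.subset_closure (Set.mul_mem_mul hj hz)

lemma mem_ip_succ_right : ∀ (m : ℕ) {j z : A}, j ∈ J → z ∈ idealPow (J : Set A) m →
    z * j ∈ idealPow (J : Set A) (m + 1) := by
  intro m
  induction m with
  | zero =>
    intro j z hj hz
    exact AddSubgroup.subset_closure
      (Set.mul_mem_mul ((mem_ip_zero J).1 hz) ((mem_ip_zero J).2 hj))
  | succ m ih =>
    intro j z hj hz
    refine AddSubgroup.closure_induction (fun x hx => ?_) (by simp [AddSubgroup.zero_mem])
      (fun x y _ _ hx hy => ?_) (fun x _ hx => ?_) hz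
    · obtain ⟨j', hj', s, hs, rfl⟩ := Set.mem_mul.1 hx
      rw [mul_assoc]
      exact AddSubgroup.subset_closure (Set.mul_mem_mul hj' (ih hj hs))
    · rw [add_mul]; exact AddSubgroup.add_mem _ hx hy
    · rw [neg_mul]; exact AddSubgroup.neg_mem _ hx

/-- products of length-`k` tuples of elements of `J` -/
def prodSet (k : ℕ) : Set A :=
  {x : A | ∃ f : Fin k → A, (∀ i, f i ∈ J) ∧ x = (List.ofFn f).prod}

lemma prodSet_mul {k : ℕ} {x j : A} (hx : x ∈ prodSet J k) (hj : j ∈ J) :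
    x * j ∈ prodSet J (k + 1) := by
  obtain ⟨f, hf, rfl⟩ := hx
  refine ⟨Fin.snoc f j, fun i => ?_, ?_⟩
  · refine Fin.lastCases ?_ (fun i => ?_) i
    · rw [Fin.snoc_last]; exact hj
    · rw [Fin.snoc_castSucc]; exact hf i
  · rw [List.ofFn_succ', List.prod_concat, Fin.snoc_last]
    simp

lemma prodSet_zero {n : ℕ} (hn : ∀ f : Fin n → A, (∀ i, f i ∈ J) → (List.ofFn f).prod = 0)
    {k : ℕ} (hk : n ≤ k) {x : A} (hx : x ∈ prodSet J k) : x = 0 := by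
  obtain ⟨f, hf, rfl⟩ := hx
  obtain ⟨d, rfl⟩ := Nat.exists_eq_add_of_le hk
  let g : Fin (n + d) → A := f
  rw [show f = g from rfl, List.ofFn_add, List.prod_append,
    hn (fun i => g (Fin.castLE (Nat.le_add_right n d) i)) (fun i => hf _), zero_mul]

lemma ip_nil_aux {n : ℕ} (hn : ∀ f : Fin n → A, (∀ i, f i ∈ J) → (List.ofFn f).prod = 0) :
    ∀ (M : ℕ) {z : A}, z ∈ idealPow (J : Set A) M →
    ∀ (k : ℕ) (x : A), x ∈ prodSet J k → n ≤ k + (M + 1) → x * z = 0 := by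
  intro M
  induction M with
  | zero =>
    intro z hz k x hx hk
    refine AddSubgroup.closure_induction (fun w hw => ?_) (by simp)
      (fun w y _ _ hw hy => ?_) (fun w _ hw => ?_) hz
    · exact prodSet_zero J hn hk (prodSet_mul J hx hw)
    · rw [mul_add, hw, hy, add_zero]
    · rw [mul_neg, hw, neg_zero]
  | succ M ih =>
    intro z hz k x hx hk
    refine AddSubgroup.closure_induction (fun w hw => ?_) (by simp)
      (fun w y _ _ hw hy => ?_) (fun w _ hw => ?_) hz
    · obtain ⟨j, hj, s, hs, rfl⟩ := Set.mem_mul.1 hw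
      rw [← mul_assoc]
      exact ih hs (k + 1) (x * j) (prodSet_mul J hx hj) (by omega)
    · rw [mul_add, hw, hy, add_zero]
    · rw [mul_neg, hw, neg_zero]

lemma ip_nilpotent {n : ℕ} (hn : ∀ f : Fin n → A, (∀ i, f i ∈ J) → (List.ofFn f).prod = 0)
    {z : A} (hz : z ∈ idealPow (J : Set A) n) : z = 0 := by
  have := ip_nil_aux J hn n hz 0 1 ⟨Fin.elim0, fun i => i.elim0, by simp⟩ (by omega)
  rwa [one_mul] at this

lemma isUnit_one_add_mem {n : ℕ}
    (hn : ∀ f : Fin n → A, (∀ i, f i ∈ J) → (List.ofFn f).prod = 0)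
    {z : A} (hz : z ∈ J) : IsUnit (1 + z) := by
  apply IsNilpotent.isUnit_one_add
  refine ⟨n, ?_⟩
  have := hn (fun _ => z) (fun _ => hz)
  rwa [List.ofFn_const, List.prod_replicate] at this

end AuxIP

/-- For the double-orbit supercharacter theory `S` of an algebra group `G = 1 + J`,
the lower `S`-central series is given by `γ_i(S) = 1 + J^i` for all `i ≥ 1`
(here `doGamma G i = γ_{i+1}(S)` and `idealPow ↑J i = J^{i+1}`). -/
theorem doGamma_eq_one_add_pow {Fq A : Type*} [Field Fq] [Fintype Fq]
    [Ring A] [Algebra Fq A] [FiniteDimensional Fq A]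
    (J : TwoSidedIdeal A)
    (hnil : ∃ n : ℕ, ∀ f : Fin n → A, (∀ i, f i ∈ J) → (List.ofFn f).prod = 0)
    (G : Subgroup Aˣ) (hG : (G : Set Aˣ) = {u : Aˣ | (u : A) - 1 ∈ J}) :
    ∀ i : ℕ, (doGamma G i : Set Aˣ) =
      {u : Aˣ | (u : A) - 1 ∈ idealPow (J : Set A) i} := by
  obtain ⟨n, hn⟩ := hnil
  have hJmem : ∀ u : Aˣ, u ∈ G ↔ (u : A) - 1 ∈ J := by
    intro u
    rw [← SetLike.mem_coe, hG]
    rfl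
  intro i
  induction i with
  | zero =>
    ext u
    show u ∈ G ↔ _
    rw [hJmem]
    exact (mem_ip_zero J).symm
  | succ i ih =>
    have ihm : ∀ g : Aˣ, g ∈ doGamma G i ↔ (g : A) - 1 ∈ idealPow (J : Set A) i := by
      intro g
      rw [← SetLike.mem_coe, ih]
      rfl
    apply subset_antisymm
    · let T : Subgroup Aˣ :=
        { carrier := {u : Aˣ | (u : A) - 1 ∈ idealPow (J : Set A) (i + 1)}
          one_mem' := by simp [AddSubgroup.zero_mem]
          mul_mem' := by
            intro u v hu hv
            simp only [Set.mem_setOf_eq] at *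
            have h : ((u * v : Aˣ) : A) - 1 = (u : A) * ((v : A) - 1) + ((u : A) - 1) := by
              rw [Units.val_mul]; noncomm_ring
            rw [h]
            exact AddSubgroup.add_mem _ (ip_mul_left J _ hv) hu
          inv_mem' := by
            intro u hu
            simp only [Set.mem_setOf_eq] at *
            have h : ((u⁻¹ : Aˣ) : A) - 1 = -(((u⁻¹ : Aˣ) : A) * ((u : A) - 1)) := by
              rw [mul_sub ((u⁻¹ : Aˣ) : A), u.inv_mul, mul_one, neg_sub]
            rw [h]
            exact AddSubgroup.neg_mem _ (ip_mul_left J _ hu) }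
      have hle : doGamma G (i + 1) ≤ T := by
        show Subgroup.closure _ ≤ T
        rw [Subgroup.closure_le]
        rintro w ⟨g, hg, k, ⟨x, hx, y, hy, hk⟩, rfl⟩
        show ((g⁻¹ * k : Aˣ) : A) - 1 ∈ idealPow (J : Set A) (i + 1)
        have hga : (g : A) - 1 ∈ idealPow (J : Set A) i := (ihm g).1 hg
        have hxJ : (x : A) - 1 ∈ J := (hJmem x).1 hx
        have hyJ : (y : A) - 1 ∈ J := (hJmem y).1 hy
        have key : ((g⁻¹ * k : Aˣ) : A) - 1 =
            ((g⁻¹ : Aˣ) : A) *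
              ((((x : A) - 1) * ((g : A) - 1) * (y : A)) + ((g : A) - 1) * ((y : A) - 1)) := by
          rw [Units.val_mul, hk]
          have h2 : (((x : A) - 1) * ((g : A) - 1) * (y : A)) + ((g : A) - 1) * ((y : A) - 1)
              = (1 : A) + (x : A) * ((g : A) - 1) * (y : A) - (g : A) := by noncomm_ring
          rw [h2, mul_sub ((g⁻¹ : Aˣ) : A), g.inv_mul]
        rw [key]
        exact ip_mul_left J _ (AddSubgroup.add_mem _
          (ip_mul_right J _ (mem_ip_succ_left J hxJ hga))
          (mem_ip_succ_right J i hyJ hga))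
      exact hle
    · intro u hu
      simp only [Set.mem_setOf_eq] at hu
      have key : ∀ d m, i + 1 ≤ m → n ≤ m + d → ∀ v : Aˣ,
          (v : A) - 1 ∈ idealPow (J : Set A) m → v ∈ doGamma G (i + 1) := by
        intro d
        induction d with
        | zero =>
          intro m him hnm v hv
          have h0 : (v : A) - 1 = 0 :=
            ip_nilpotent J hn (ip_le J (by omega : n ≤ m) hv)
          have hv1 : v = 1 := Units.ext (by
            rw [Units.val_one, ← sub_eq_zero]; exact h0)
          rw [hv1]
          exact one_mem _
        | succ d hd =>
          intro m him hnm v hv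
          obtain ⟨m', rfl⟩ : ∃ m', m = m' + 1 := ⟨m - 1, by omega⟩
          have main : ∀ z, z ∈ idealPow (J : Set A) (m' + 1) →
              ∃ w : Aˣ, (w : A) = 1 + z ∧ w ∈ doGamma G (i + 1) := by
            intro z hz
            refine AddSubgroup.closure_induction ?_ ?_ ?_ ?_ hz
            · rintro zz hzz
              obtain ⟨j, hj, s, hs, rfl⟩ := Set.mem_mul.1 hzz
              have hsi : s ∈ idealPow (J : Set A) i := ip_le J (by omega) hs
              have hsJ : s ∈ J := ip_subset_J J hsi
              obtain ⟨g, hgval⟩ := isUnit_one_add_mem J hn hsJ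
              obtain ⟨x, hxval⟩ := isUnit_one_add_mem J hn (J.mul_mem_left (1 + s) j hj)
              obtain ⟨u', hu'val⟩ := isUnit_one_add_mem J hn (J.mul_mem_right j s hj)
              have hgmem : g ∈ doGamma G i := (ihm g).2 (by rw [hgval]; simpa using hsi)
              have hk : g * u' ∈ doubleOrbitClass G g := by
                refine ⟨x, (hJmem x).2 (by rw [hxval]; simpa using J.mul_mem_left (1 + s) j hj),
                  1, (hJmem 1).2 (by simp [J.zero_mem]), ?_⟩
                rw [Units.val_mul, hgval, hu'val, hxval, Units.val_one]
                noncomm_ring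
              have hmem : g⁻¹ * (g * u') ∈ doGamma G (i + 1) := by
                apply Subgroup.subset_closure
                exact ⟨g, hgmem, g * u', hk, rfl⟩
              rw [inv_mul_cancel_left] at hmem
              exact ⟨u', hu'val, hmem⟩
            · exact ⟨1, by simp, one_mem _⟩
            · rintro z w hz hw ⟨vz, hvz, hvzm⟩ ⟨vw, hvw, hvwm⟩
              replace hz : z ∈ idealPow (J : Set A) (m' + 1) := hz
              replace hw : w ∈ idealPow (J : Set A) (m' + 1) := hw
              have hzJ : z ∈ J := ip_subset_J J hz
              have hwJ : w ∈ J := ip_subset_J J hw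
              have hzw : z * w ∈ idealPow (J : Set A) (m' + 2) := mem_ip_succ_left J hzJ hw
              obtain ⟨t, htval⟩ := isUnit_one_add_mem J hn (J.add_mem hzJ hwJ)
              have he : (↑t⁻¹ : A) * (z * w) ∈ idealPow (J : Set A) (m' + 2) :=
                ip_mul_left J _ hzw
              obtain ⟨sU, hsval⟩ := isUnit_one_add_mem J hn (ip_subset_J J he)
              have hsmem : sU ∈ doGamma G (i + 1) :=
                hd (m' + 2) (by omega) (by omega) sU (by rw [hsval]; simpa using he)
              have hts : t * sU = vz * vw := by
                apply Units.ext
                rw [Units.val_mul, Units.val_mul, htval, hsval, hvz, hvw]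
                have h1 : (1 + (z + w)) * ((↑t⁻¹ : A) * (z * w)) = z * w := by
                  rw [← htval, ← mul_assoc, t.mul_inv, one_mul]
                calc (1 + (z + w)) * (1 + (↑t⁻¹ : A) * (z * w))
                    = 1 + (z + w) + (1 + (z + w)) * ((↑t⁻¹ : A) * (z * w)) := by noncomm_ring
                  _ = 1 + (z + w) + z * w := by rw [h1]
                  _ = (1 + z) * (1 + w) := by noncomm_ring
              have ht : t = vz * vw * sU⁻¹ := by rw [eq_mul_inv_iff_mul_eq, hts]
              refine ⟨t, by rw [htval], ?_⟩
              rw [ht]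
              exact mul_mem (mul_mem hvzm hvwm) (inv_mem hsmem)
            · rintro z hz ⟨vz, hvz, hvzm⟩
              replace hz : z ∈ idealPow (J : Set A) (m' + 1) := hz
              have hzJ : z ∈ J := ip_subset_J J hz
              have hzz : -(z * z) ∈ idealPow (J : Set A) (m' + 2) :=
                AddSubgroup.neg_mem _ (mem_ip_succ_left J hzJ hz)
              obtain ⟨t, htval⟩ := isUnit_one_add_mem J hn (J.neg_mem hzJ)
              obtain ⟨sU, hsval⟩ := isUnit_one_add_mem J hn (ip_subset_J J hzz)
              have hsmem : sU ∈ doGamma G (i + 1) :=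
                hd (m' + 2) (by omega) (by omega) sU (by rw [hsval]; simpa using hzz)
              have hts : vz * t = sU := Units.ext (by
                rw [Units.val_mul, hvz, htval, hsval]; noncomm_ring)
              refine ⟨t, by rw [htval], ?_⟩
              have ht : t = vz⁻¹ * sU := by rw [← hts, inv_mul_cancel_left]
              rw [ht]
              exact mul_mem (inv_mem hvzm) hsmem
          obtain ⟨w, hwval, hwmem⟩ := main ((v : A) - 1) hv
          have hwv : w = v := Units.ext (by rw [hwval]; abel)
          rwa [← hwv]
      exact key n (i + 1) le_rfl (by omega) u hu
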